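/- Under the extended linear mixing model with separability (pure pixel) condition, the normalized endmembers are identifiable from the data directions: if for each p = 1,...,P there exists a data point x = ψ s_p with ψ > 0, and s_1,...,s_P are linearly independent, then the set of unit-normalized data points {x/‖x‖₂} contains the normalized endmembers s_p/‖s_p‖₂, and these are exactly the extreme points of the normalized data lying on extreme rays of cone{s_1,...,s_P}. -/
import Mathlib


/-- Under the extended linear mixing model with the separability (pure pixel) condition, the
normalized endmembers are identifiable from the data directions: each normalized endmember
`s p / ‖s p‖` belongs to the set of unit-normalized data points, and the normalized data
points lying on extreme rays of `cone{s₁,...,s_P}` are exactly the normalized endmembers. -/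
theorem separability_identifiability
    (L P : ℕ) (s : Fin P → EuclideanSpace ℝ (Fin L)) (hs : LinearIndependent ℝ s)
    (X : Set (EuclideanSpace ℝ (Fin L)))
    (hX : X ⊆ {x | ∃ φ : Fin P → ℝ, (∀ p, 0 ≤ φ p) ∧ x = ∑ p, φ p • s p})
    (hsep : ∀ p : Fin P, ∃ ψ : ℝ, 0 < ψ ∧ ψ • s p ∈ X) :
    (∀ p : Fin P,
        ‖s p‖⁻¹ • s p ∈ {y | ∃ x ∈ X, x ≠ 0 ∧ y = ‖x‖⁻¹ • x}) ∧
    ({y ∈ {y | ∃ x ∈ X, x ≠ 0 ∧ y = ‖x‖⁻¹ • x} |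
        y ∈ {x | ∃ φ : Fin P → ℝ, (∀ p, 0 ≤ φ p) ∧ x = ∑ p, φ p • s p} ∧
        ∀ u v : EuclideanSpace ℝ (Fin L),
          u ∈ {x | ∃ φ : Fin P → ℝ, (∀ p, 0 ≤ φ p) ∧ x = ∑ p, φ p • s p} →
          v ∈ {x | ∃ φ : Fin P → ℝ, (∀ p, 0 ≤ φ p) ∧ x = ∑ p, φ p • s p} →
          y = u + v →
          (∃ c : ℝ, 0 ≤ c ∧ u = c • y) ∧ (∃ c : ℝ, 0 ≤ c ∧ v = c • y)} =
      Set.range fun p => ‖s p‖⁻¹ • s p) := by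
  have hs0 : ∀ p, s p ≠ 0 := fun p => hs.ne_zero p
  have hsn : ∀ p, (0:ℝ) < ‖s p‖ := fun p => norm_pos_iff.2 (hs0 p)
  have hind : ∀ (g : Fin P → ℝ) (p : Fin P),
      ∑ q, (if q = p then g q else 0) • s q = g p • s p := by
    intro g p
    rw [Finset.sum_eq_single p]
    · simp
    · intro q _ hq; simp [hq]
    · intro h; exact absurd (Finset.mem_univ p) h
  -- coefficient comparison from linear independence
  have hcoef : ∀ a b : Fin P → ℝ, ∑ p, a p • s p = ∑ p, b p • s p → a = b := by
    intro a b h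
    have h0 : ∑ p, (a p - b p) • s p = 0 := by
      simp only [sub_smul, Finset.sum_sub_distrib, h, sub_self]
    have := Fintype.linearIndependent_iff.1 hs (fun p => a p - b p) h0
    funext p
    have hp : a p - b p = 0 := this p
    linarith
  -- first part
  have hmem : ∀ p : Fin P,
      ‖s p‖⁻¹ • s p ∈ {y | ∃ x ∈ X, x ≠ 0 ∧ y = ‖x‖⁻¹ • x} := by
    intro p
    obtain ⟨ψ, hψ, hmemX⟩ := hsep p
    refine ⟨ψ • s p, hmemX, ?_, ?_⟩
    · exact smul_ne_zero (ne_of_gt hψ) (hs0 p)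
    · rw [norm_smul, smul_smul]
      congr 1
      rw [Real.norm_eq_abs, abs_of_pos hψ]
      have h1 : ψ ≠ 0 := ne_of_gt hψ
      have h2 : ‖s p‖ ≠ 0 := ne_of_gt (hsn p)
      field_simp
  refine ⟨hmem, ?_⟩
  ext y
  simp only [Set.mem_setOf_eq, Set.mem_sep_iff, Set.mem_range]
  constructor
  · rintro ⟨⟨x, hxX, hx0, hyx⟩, ⟨φ, hφ, hyφ⟩, hext⟩
    have hy1 : ‖y‖ = 1 := by
      rw [hyx, norm_smul, Real.norm_eq_abs, abs_of_pos (inv_pos.2 (norm_pos_iff.2 hx0)),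
        inv_mul_cancel₀ (ne_of_gt (norm_pos_iff.2 hx0))]
    have hy0 : y ≠ 0 := by intro h; rw [h, norm_zero] at hy1; norm_num at hy1
    have hphi : ∃ p, φ p ≠ 0 := by
      by_contra h
      push_neg at h
      apply hy0
      rw [hyφ]
      simp [h]
    obtain ⟨p, hp⟩ := hphi
    have hpp : 0 < φ p := lt_of_le_of_ne (hφ p) (Ne.symm hp)
    refine ⟨p, ?_⟩
    set u : EuclideanSpace ℝ (Fin L) := φ p • s p with hu
    set v : EuclideanSpace ℝ (Fin L) := ∑ q, (if q = p then 0 else φ q) • s q with hv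
    have huc : u ∈ {x : EuclideanSpace ℝ (Fin L) |
        ∃ φ : Fin P → ℝ, (∀ p, 0 ≤ φ p) ∧ x = ∑ p, φ p • s p} := by
      refine ⟨fun q => if q = p then φ p else 0, fun q => by positivity, ?_⟩
      rw [hu]
      rw [show (∑ q, (if q = p then φ p else 0) • s q) = φ p • s p from hind (fun _ => φ p) p]
    have hvc : v ∈ {x : EuclideanSpace ℝ (Fin L) |
        ∃ φ : Fin P → ℝ, (∀ p, 0 ≤ φ p) ∧ x = ∑ p, φ p • s p} := by
      exact ⟨fun q => if q = p then 0 else φ q,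
        fun q => by by_cases h : q = p <;> simp [h, hφ q], rfl⟩
    have hsum : y = u + v := by
      rw [hyφ, hu, hv, ← hind (fun _ => φ p) p, ← Finset.sum_add_distrib]
      congr 1; funext q
      rw [← add_smul]
      congr 1
      by_cases h : q = p
      · simp [h]
      · simp [h]
    obtain ⟨⟨c, hc, hcu⟩, -⟩ := hext u v huc hvc hsum
    have hcy : c • y = ∑ q, (c * φ q) • s q := by
      rw [hyφ, Finset.smul_sum]
      congr 1; funext q; rw [smul_smul]
    have hcoef1 : (fun q => if q = p then φ p else 0) = fun q => c * φ q := by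
      apply hcoef
      rw [hind (fun _ => φ p) p, ← hcy, ← hcu, hu]
    have hc1 : c = 1 := by
      have h : φ p = c * φ p := by simpa using congrFun hcoef1 p
      have h' : c * φ p = 1 * φ p := by rw [one_mul, ← h]
      exact mul_right_cancel₀ hp h'
    have hq0 : ∀ q, q ≠ p → φ q = 0 := by
      intro q hq
      have h := congrFun hcoef1 q
      simp only [if_neg hq, hc1, one_mul] at h
      exact h.symm
    have hyp : y = φ p • s p := by
      rw [hyφ, ← hind φ p]
      congr 1; funext q
      by_cases h : q = p
      · simp [h]
      · simp [h, hq0 q h]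
    have hφp : φ p = ‖s p‖⁻¹ := by
      have h : ‖y‖ = φ p * ‖s p‖ := by
        rw [hyp, norm_smul, Real.norm_eq_abs, abs_of_pos hpp]
      rw [hy1] at h
      have h2 : ‖s p‖ ≠ 0 := ne_of_gt (hsn p)
      field_simp
      linarith
    rw [hyp, hφp]
  · rintro ⟨p, hp⟩
    refine ⟨hp ▸ hmem p, ?_, ?_⟩
    · refine ⟨fun q => if q = p then ‖s p‖⁻¹ else 0, fun q => by positivity, ?_⟩
      rw [← hp, hind (fun _ => ‖s p‖⁻¹) p]
    · rintro u v ⟨a, ha, hua⟩ ⟨b, hb, hvb⟩ hsum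
      have hab : (fun q => a q + b q) = fun q => if q = p then ‖s p‖⁻¹ else 0 := by
        apply hcoef
        have h1 : ∑ q, (a q + b q) • s q = u + v := by
          rw [hua, hvb, ← Finset.sum_add_distrib]
          congr 1; funext q; rw [add_smul]
        rw [h1, ← hsum, ← hp, hind (fun _ => ‖s p‖⁻¹) p]
      have hq0 : ∀ q, q ≠ p → a q = 0 ∧ b q = 0 := by
        intro q hq
        have h := congrFun hab q
        simp only [if_neg hq] at h
        constructor <;> linarith [ha q, hb q]
      have hcanc : ∀ t : ℝ, t * ‖s p‖ * ‖s p‖⁻¹ = t := by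
        intro t
        rw [mul_assoc, mul_inv_cancel₀ (ne_of_gt (hsn p)), mul_one]
      have hua2 : u = (a p * ‖s p‖) • y := by
        rw [hua, ← hp, smul_smul, hcanc, Finset.sum_eq_single p]
        · intro q _ hq; simp [(hq0 q hq).1]
        · intro h; exact absurd (Finset.mem_univ p) h
      have hvb2 : v = (b p * ‖s p‖) • y := by
        rw [hvb, ← hp, smul_smul, hcanc, Finset.sum_eq_single p]
        · intro q _ hq; simp [(hq0 q hq).2]
        · intro h; exact absurd (Finset.mem_univ p) h
      exact ⟨⟨a p * ‖s p‖, mul_nonneg (ha p) (norm_nonneg _), hua2⟩,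
        ⟨b p * ‖s p‖, mul_nonneg (hb p) (norm_nonneg _), hvb2⟩⟩
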